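/- For any integer d ≥ 3 and any real p ≥ 0, if ξ_1,…,ξ_{d−1} are nonnegative real numbers with Σ_{i=1}^{d−1} ξ_i^{p+2} = 1, then Σ_{i=1}^{d−2} (ξ_{i+1} ξ_i^{p+1} + ξ_{i+1}^{p+1} ξ_i) < 2. -/

import Mathlib

/-!
With `q = p + 1`, each term satisfies
`a ^ (q + 1) + b ^ (q + 1) = b a ^ q + b ^ q a + (a - b)(a ^ q - b ^ q)`, and the last product is
nonnegative because `t ↦ t ^ q` is increasing. Summing over consecutive pairs, every `ξ_i ^ (q + 1)`
is counted twice except the two endpoints, so the cross sum is `2` minus the endpoint terms and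
the products. If all of these vanished, `ξ_0 = 0` and consecutive `ξ_i` would agree, forcing every
`ξ_i = 0`, against `∑ ξ_i ^ (q + 1) = 1`.
-/

open Finset

namespace Real

variable {a b q : ℝ}

lemma rpow_add_one_add_rpow_add_one_eq (hq : q + 1 ≠ 0) (ha : 0 ≤ a) (hb : 0 ≤ b) :
    a ^ (q + 1) + b ^ (q + 1) = b * a ^ q + b ^ q * a + (a - b) * (a ^ q - b ^ q) := by
  rw [rpow_add_one' ha hq, rpow_add_one' hb hq]
  ring

lemma sub_mul_rpow_sub_rpow_nonneg (hq : 0 ≤ q) (ha : 0 ≤ a) (hb : 0 ≤ b) :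
    0 ≤ (a - b) * (a ^ q - b ^ q) := by
  rcases le_total a b with hab | hab
  · exact mul_nonneg_of_nonpos_of_nonpos (sub_nonpos.2 hab)
      (sub_nonpos.2 (rpow_le_rpow ha hab hq))
  · exact mul_nonneg (sub_nonneg.2 hab) (sub_nonneg.2 (rpow_le_rpow hb hab hq))

lemma eq_of_sub_mul_rpow_sub_rpow_eq_zero (hq : q ≠ 0) (ha : 0 ≤ a) (hb : 0 ≤ b)
    (h : (a - b) * (a ^ q - b ^ q) = 0) : a = b := by
  rcases mul_eq_zero.1 h with h | h
  · exact sub_eq_zero.1 h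
  · exact (rpow_left_inj ha hb hq).1 (sub_eq_zero.1 h)

end Real

lemma Finset.sum_range_add_succ_add {M : Type*} [AddCommMonoid M] (f : ℕ → M) (n : ℕ) :
    ∑ i ∈ range n, (f i + f (i + 1)) + (f 0 + f n) =
      ∑ i ∈ range (n + 1), f i + ∑ i ∈ range (n + 1), f i := by
  rw [sum_add_distrib]
  nth_rw 2 [sum_range_succ']
  rw [sum_range_succ]
  abel

lemma apply_eq_apply_zero_of_succ_eq {α : Type*} {f : ℕ → α} {n : ℕ}
    (h : ∀ i < n, f (i + 1) = f i) : ∀ i ≤ n, f i = f 0 := by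
  intro i hi
  induction i with
  | zero => rfl
  | succ i ih => rw [h i hi, ih (by omega)]

open Real in
theorem cross_sum_lt_two_mul_sum_rpow {q : ℝ} (hq : 0 < q) {x : ℕ → ℝ} (hx : ∀ i, 0 ≤ x i)
    {n : ℕ} (hpos : 0 < ∑ i ∈ range (n + 1), x i ^ (q + 1)) :
    ∑ i ∈ range n, (x (i + 1) * x i ^ q + x (i + 1) ^ q * x i) <
      2 * ∑ i ∈ range (n + 1), x i ^ (q + 1) := by
  set slack : ℕ → ℝ := fun i ↦ (x i - x (i + 1)) * (x i ^ q - x (i + 1) ^ q)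
  have hslack : ∀ i, 0 ≤ slack i := fun i ↦ sub_mul_rpow_sub_rpow_nonneg hq.le (hx _) (hx _)
  have hend : ∀ i, 0 ≤ x i ^ (q + 1) := fun i ↦ rpow_nonneg (hx i) _
  have htotal : 2 * ∑ i ∈ range (n + 1), x i ^ (q + 1) =
      ∑ i ∈ range n, (x (i + 1) * x i ^ q + x (i + 1) ^ q * x i) +
        (∑ i ∈ range n, slack i + x n ^ (q + 1) + x 0 ^ (q + 1)) := by
    rw [two_mul, ← sum_range_add_succ_add (fun i ↦ x i ^ (q + 1)),
      sum_congr rfl fun i _ ↦ rpow_add_one_add_rpow_add_one_eq (by linarith) (hx i) (hx (i + 1)),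
      sum_add_distrib]
    ring
  rw [htotal, lt_add_iff_pos_right]
  by_contra! hle
  have hslack_sum : 0 ≤ ∑ i ∈ range n, slack i := sum_nonneg fun i _ ↦ hslack i
  have hx0 : x 0 = 0 :=
    (rpow_eq_zero (hx 0) (y := q + 1) (by linarith)).1 (by linarith [hend n, hend 0])
  have hslack0 : ∀ i ∈ range n, slack i = 0 :=
    (sum_eq_zero_iff_of_nonneg fun i _ ↦ hslack i).1 (by linarith [hend n, hend 0])
  have hconst : ∀ i ≤ n, x i = x 0 := apply_eq_apply_zero_of_succ_eq fun i hi ↦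
    (eq_of_sub_mul_rpow_sub_rpow_eq_zero hq.ne' (hx i) (hx (i + 1))
      (hslack0 i (mem_range.2 hi))).symm
  have hzero : ∑ i ∈ range (n + 1), x i ^ (q + 1) = 0 := sum_eq_zero fun i hi ↦ by
    rw [hconst i (Nat.lt_succ_iff.1 (mem_range.1 hi)), hx0, zero_rpow (by linarith)]
  exact hpos.ne' hzero

theorem cross_sum_lt_two
    (d : ℕ) (p : ℝ) (hp : 0 ≤ p)
    (ξ : ℕ → ℝ) (hξ : ∀ i, 0 ≤ ξ i)
    (hsum : ∑ i ∈ Finset.range (d - 1), ξ i ^ (p + 2) = 1) :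
    ∑ i ∈ Finset.range (d - 2), (ξ (i + 1) * ξ i ^ (p + 1) + ξ (i + 1) ^ (p + 1) * ξ i)
      < 2 := by
  obtain ⟨n, hn⟩ : ∃ n, d - 1 = n + 1 :=
    Nat.exists_eq_succ_of_ne_zero fun h ↦ by simp [h] at hsum
  rw [show d - 2 = n by omega]
  rw [hn, show p + 2 = p + 1 + 1 by ring] at hsum
  have h := cross_sum_lt_two_mul_sum_rpow (by linarith : 0 < p + 1) hξ (hsum ▸ one_pos)
  rwa [hsum, mul_one] at h
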